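/- Uniform consistency implies conditional coverage consistency: Suppose for every ε, δ > 0 there exists B₀ such that for all B ≥ B₀, with probability at least 1 - δ, sup_{t∈ℝ, θ'∈Θ} |Ĥ_B(t|θ') - H(t|θ')| ≤ ε, where Ĥ_B is constant on the partition element A(θ) and the cutoff Ĉ_{θ,B} satisfies Ĥ_B(Ĉ_{θ,B}|θ) = α exactly, and suppose the partition element containing θ has probability at least γ/B with γ > 0. Then for every θ with H(·|θ) continuous, lim_{B→∞} P(θ ∈ R̂_B(X) | θ) = 1 - α, where R̂_B(X) = {θ : τ(X,θ) ≥ Ĉ_{θ,B}}. -/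

import Mathlib

open MeasureTheory Filter Set ProbabilityTheory

/-!
Write `F` for the continuous distribution function of the test statistic `τ(X, θ₀)`. Since the
cutoff solves `Ĥ_B(Ĉ_B | θ₀) = α` and `Ĥ_B` is uniformly close to `F` with high probability,
`F(Ĉ_B) → α` in probability. Continuity of `F` gives quantiles `t₁ < t₂` with
`F(t₁) = α - η` and `F(t₂) = α + η`; whenever `|F(Ĉ_B) - α| < η` the cutoff lies in `(t₁, t₂)`,
so the coverage `P(Ĉ_B ≤ τ)` is squeezed between `1 - F(t₂)` and `1 - F(t₁)` up to the
vanishing probability of the complementary event.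
-/

lemma exists_cdf_eq_of_continuous {μ : Measure ℝ} [IsProbabilityMeasure μ]
    (hμ : Continuous (cdf μ)) {s : ℝ} (hs : s ∈ Ioo 0 1) : ∃ t, cdf μ t = s :=
  mem_range_of_exists_le_of_exists_ge hμ
    ((tendsto_cdf_atBot μ).eventually (ge_mem_nhds hs.1)).exists
    ((tendsto_cdf_atTop μ).eventually (le_mem_nhds hs.2)).exists

lemma mem_Ioo_of_abs_sub_lt {F : ℝ → ℝ} (hF : Monotone F) {t₁ t₂ c α η : ℝ}
    (h₁ : F t₁ ≤ α - η) (h₂ : α + η ≤ F t₂) (hc : |F c - α| < η) : c ∈ Ioo t₁ t₂ := by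
  obtain ⟨hlo, hhi⟩ := abs_lt.mp hc
  exact ⟨hF.reflect_lt (by linarith), hF.reflect_lt (by linarith)⟩

section Coverage

variable {Ω : Type*} [MeasurableSpace Ω] {P : Measure Ω} [IsProbabilityMeasure P]
  {X : Ω → ℝ}

lemma cdf_map_eq_measureReal (hX : Measurable X) (t : ℝ) :
    cdf (P.map X) t = P.real {ω | X ω ≤ t} := by
  have := Measure.isProbabilityMeasure_map (μ := P) hX.aemeasurable
  rw [cdf_eq_real, measureReal_def, measureReal_def, Measure.map_apply hX measurableSet_Iic]
  rfl

lemma measureReal_lt_eq_one_sub_cdf_map (hX : Measurable X) (t : ℝ) :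
    P.real {ω | t < X ω} = 1 - cdf (P.map X) t := by
  have hcompl : {ω | t < X ω} = {ω | X ω ≤ t}ᶜ := by
    ext ω
    simp [not_le]
  rw [hcompl, probReal_compl_eq_one_sub (s := {ω | X ω ≤ t}) (hX measurableSet_Iic),
    cdf_map_eq_measureReal hX]

lemma dist_measureReal_le_one_sub_le (hX : Measurable X) (c : Ω → ℝ) {α η t₁ t₂ : ℝ}
    (h₁ : cdf (P.map X) t₁ = α - η) (h₂ : cdf (P.map X) t₂ = α + η) :
    dist (P.real {ω | c ω ≤ X ω}) (1 - α) ≤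
      η + P.real {ω | η ≤ dist (cdf (P.map X) (c ω)) α} := by
  set bad := {ω | η ≤ dist (cdf (P.map X) (c ω)) α}
  have hgood : ∀ ω ∉ bad, c ω ∈ Ioo t₁ t₂ := fun ω hω =>
    mem_Ioo_of_abs_sub_lt (monotone_cdf _) h₁.le h₂.ge (not_le.mp hω)
  have hupper : {ω | c ω ≤ X ω} ⊆ {ω | t₁ < X ω} ∪ bad := fun ω hω =>
    or_iff_not_imp_right.mpr fun hb => (hgood ω hb).1.trans_le hω
  have hlower : {ω | t₂ < X ω} ⊆ {ω | c ω ≤ X ω} ∪ bad := fun ω hω =>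
    or_iff_not_imp_right.mpr fun hb => (hgood ω hb).2.le.trans hω.le
  have hup := (measureReal_mono hupper (measure_ne_top P _)).trans (measureReal_union_le _ _)
  have hlow := (measureReal_mono hlower (measure_ne_top P _)).trans (measureReal_union_le _ _)
  rw [measureReal_lt_eq_one_sub_cdf_map hX, h₁] at hup
  rw [measureReal_lt_eq_one_sub_cdf_map hX, h₂] at hlow
  rw [Real.dist_eq, abs_le]
  constructor <;> linarith

theorem tendsto_measureReal_le_of_tendstoInMeasure_cdf {ι : Type*} {l : Filter ι}
    (hX : Measurable X) (hcont : Continuous (cdf (P.map X))) {α : ℝ} (hα : α ∈ Ioo 0 1)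
    {C : ι → Ω → ℝ} (hC : TendstoInMeasure P (fun i ω => cdf (P.map X) (C i ω)) l fun _ => α) :
    Tendsto (fun i => P.real {ω | C i ω ≤ X ω}) l (nhds (1 - α)) := by
  have := Measure.isProbabilityMeasure_map (μ := P) hX.aemeasurable
  obtain ⟨hα0, hα1⟩ := hα
  rw [Metric.tendsto_nhds]
  intro ε hε
  obtain ⟨η, hη, hηlt⟩ := exists_between
    (lt_min (lt_min (half_pos hε) hα0) (sub_pos.mpr hα1))
  simp only [lt_min_iff] at hηlt
  obtain ⟨⟨hηε, hηα⟩, hηα'⟩ := hηlt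
  obtain ⟨t₁, ht₁⟩ := exists_cdf_eq_of_continuous hcont (s := α - η) ⟨by linarith, by linarith⟩
  obtain ⟨t₂, ht₂⟩ := exists_cdf_eq_of_continuous hcont (s := α + η) ⟨by linarith, by linarith⟩
  have hbad := (tendstoInMeasure_iff_measureReal_dist.mp hC η hη).eventually
    (gt_mem_nhds (half_pos hε))
  filter_upwards [hbad] with i hi
  calc dist (P.real {ω | C i ω ≤ X ω}) (1 - α)
      ≤ η + P.real {ω | η ≤ dist (cdf (P.map X) (C i ω)) α} :=
        dist_measureReal_le_one_sub_le hX (C i) ht₁ ht₂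
    _ < ε := by linarith

lemma tendstoInMeasure_const_of_forall_measureReal_ge {ι : Type*} {l : Filter ι}
    {Y : ι → Ω → ℝ} (hY : ∀ i, Measurable (Y i)) {y : ℝ}
    (h : ∀ ε > (0 : ℝ), ∀ δ > (0 : ℝ), ∀ᶠ i in l, 1 - δ ≤ P.real {ω | |Y i ω - y| ≤ ε}) :
    TendstoInMeasure P Y l fun _ => y := by
  rw [tendstoInMeasure_iff_measureReal_dist]
  intro ε hε
  rw [Metric.tendsto_nhds]
  intro δ hδ
  filter_upwards [h (ε / 2) (by linarith) (δ / 2) (by linarith)] with i hi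
  have hmeas : MeasurableSet {ω | |Y i ω - y| ≤ ε / 2} :=
    measurableSet_le ((hY i).sub_const y).abs measurable_const
  have hsub : {ω | ε ≤ dist (Y i ω) y} ⊆ {ω | |Y i ω - y| ≤ ε / 2}ᶜ := fun ω hω hle => by
    have hω : ε ≤ |Y i ω - y| := hω
    linarith [hle.out]
  have hbad := measureReal_mono (μ := P) hsub
  rw [probReal_compl_eq_one_sub hmeas] at hbad
  rw [Real.dist_eq, sub_zero, abs_of_nonneg measureReal_nonneg]
  linarith

end Coverage

theorem uniform_consistency_implies_conditional_coverage_general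
    {Ω ΘT : Type*} [MeasurableSpace Ω]
    (P : Measure Ω) [IsProbabilityMeasure P]
    (α : ℝ) (hα : α ∈ Set.Ioo (0 : ℝ) 1)
    (θ0 : ΘT)
    (Htrue : ΘT → ℝ → ℝ) (hHcont : Continuous (Htrue θ0))
    (τX : Ω → ℝ) (hτX : Measurable τX)
    (hCDF : ∀ t, Htrue θ0 t = (P {ω | τX ω ≤ t}).toReal)
    (Hhat : ℕ → Ω → ΘT → ℝ → ℝ)
    (huniform : ∀ ε > (0 : ℝ), ∀ δ > (0 : ℝ), ∃ B0 : ℕ, ∀ B ≥ B0,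
      1 - δ ≤ (P {ω | ∀ (t : ℝ) (θ' : ΘT), |Hhat B ω θ' t - Htrue θ' t| ≤ ε}).toReal)
    (C : ℕ → Ω → ℝ) (hCmeas : ∀ B, Measurable (C B))
    (hC : ∀ B ω, Hhat B ω θ0 (C B ω) = α) :
    Tendsto (fun B => (P {ω | C B ω ≤ τX ω}).toReal) atTop (nhds (1 - α)) := by
  have hF : Htrue θ0 = cdf (P.map τX) :=
    funext fun t => by rw [hCDF, cdf_map_eq_measureReal hτX]; rfl
  rw [hF] at hHcont
  refine tendsto_measureReal_le_of_tendstoInMeasure_cdf hτX hHcont hα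
    (tendstoInMeasure_const_of_forall_measureReal_ge
      (fun B => hHcont.measurable.comp (hCmeas B)) fun ε hε δ hδ => ?_)
  obtain ⟨B0, hB0⟩ := huniform ε hε δ hδ
  filter_upwards [eventually_ge_atTop B0] with B hB
  refine (hB0 B hB).trans (measureReal_mono fun ω hω => ?_)
  have hclose := hω (C B ω) θ0
  rwa [hC, abs_sub_comm, hF] at hclose

/-- Uniform consistency implies conditional coverage consistency.  Fix `θ₀` with
continuous true conditional CDF `H = H(·|θ₀)` of the statistic `τ(X,θ₀)` under
the model at `θ₀`.  Suppose the estimator `Ĥ_B(·|·)` is constant on the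
partition element `A ∋ θ₀`, the cutoff satisfies `Ĥ_B(Ĉ_{θ₀,B}|θ₀) = α` exactly,
the estimator is uniformly consistent in probability (over all `t` and `θ'`),
the partition element has reference probability at least `γ/B`, and the cutoff is
independent of the fresh test statistic.  Then
`lim_{B→∞} P(θ₀ ∈ R̂_B(X) | θ₀) = 1 - α`, i.e. the coverage
`P(τ(X,θ₀) ≥ Ĉ_{θ₀,B})` tends to `1 - α`. -/
theorem uniform_consistency_implies_conditional_coverage
    {Ω ΘT : Type*} [MeasurableSpace Ω] [MeasurableSpace ΘT]
    (P : Measure Ω) [IsProbabilityMeasure P]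
    (α : ℝ) (hα : α ∈ Set.Ioo (0 : ℝ) 1)
    (θ0 : ΘT) (A : Set ΘT) (hθ0 : θ0 ∈ A)
    (Htrue : ΘT → ℝ → ℝ) (hHcont : Continuous (Htrue θ0))
    (τX : Ω → ℝ) (hτX : Measurable τX)
    (hCDF : ∀ t, Htrue θ0 t = (P {ω | τX ω ≤ t}).toReal)
    (Hhat : ℕ → Ω → ΘT → ℝ → ℝ)
    (hconst : ∀ B ω θ', θ' ∈ A → Hhat B ω θ' = Hhat B ω θ0)
    (huniform : ∀ ε > (0 : ℝ), ∀ δ > (0 : ℝ), ∃ B0 : ℕ, ∀ B ≥ B0,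
      1 - δ ≤ (P {ω | ∀ (t : ℝ) (θ' : ΘT), |Hhat B ω θ' t - Htrue θ' t| ≤ ε}).toReal)
    (C : ℕ → Ω → ℝ) (hCmeas : ∀ B, Measurable (C B))
    (hC : ∀ B ω, Hhat B ω θ0 (C B ω) = α)
    (γ : ℝ) (hγ : 0 < γ)
    (r : Measure ΘT) [IsProbabilityMeasure r]
    (hAmeas : MeasurableSet A) (hAr : ∀ B : ℕ, γ / B ≤ (r A).toReal)
    (hindep : ∀ B, IndepFun (C B) τX P) :
    Tendsto (fun B => (P {ω | C B ω ≤ τX ω}).toReal) atTop (nhds (1 - α)) :=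
  uniform_consistency_implies_conditional_coverage_general P α hα θ0 Htrue hHcont τX hτX hCDF Hhat
    huniform C hCmeas hC
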